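/- arXiv:1508.06583 — 4 statements merged into one kernel-verified Lean document; each statement's English description precedes it below -/
import Mathlib

section
/- Let γ ≥ 1 and let t₁ < t₂ be natural numbers. Define beep times for two processors: B₁(i) = t₁ + 4γi + i(i+1)/2 and B₂(i) = t₂ + 4γi + i(i+1)/2. If B₂(i₂) = B₁(i₁) for some indices i₁, i₂, then i₁ > i₂, and moreover B₂(i₂+1) < B₁(i₁+1). Consequently, no two consecutive beeps of the second processor coincide with beeps of the first processor. -/
private lemma beep_step (γ i : ℕ) :
    4 * γ * (i + 1) + (i + 1) * (i + 1 + 1) / 2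
      = (4 * γ * i + i * (i + 1) / 2) + (4 * γ + i + 1) := by
  have h2 : (i + 1) * (i + 1 + 1) = i * (i + 1) + 2 * (i + 1) := by ring
  have h3 : 4 * γ * (i + 1) = 4 * γ * i + 4 * γ := by ring
  have hd : 2 ∣ i * (i + 1) := (Nat.even_mul_succ_self i).two_dvd
  omega

private lemma beep_mono (γ : ℕ) : StrictMono (fun i => 4 * γ * i + i * (i + 1) / 2) := by
  apply strictMono_nat_of_lt_succ
  intro i
  show _ < 4 * γ * (i+1) + (i+1) * (i+1+1) / 2
  rw [beep_step]
  omega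

/-- If two processors start at rounds t₁ < t₂ and follow the schedule
b(i) = 4γi + i(i+1)/2, then coinciding beeps B₂(i₂) = B₁(i₁) force i₁ > i₂
and the next beeps satisfy B₂(i₂+1) < B₁(i₁+1); hence no two consecutive
beeps of the later processor coincide with beeps of the earlier one. -/
theorem no_two_consecutive_coinciding_beeps (γ t₁ t₂ : ℕ) (hγ : 1 ≤ γ) (ht : t₁ < t₂)
    (B₁ B₂ : ℕ → ℕ)
    (hB₁ : ∀ i, B₁ i = t₁ + (4 * γ * i + i * (i + 1) / 2))
    (hB₂ : ∀ i, B₂ i = t₂ + (4 * γ * i + i * (i + 1) / 2)) :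
    (∀ i₁ i₂, B₂ i₂ = B₁ i₁ → i₂ < i₁ ∧ B₂ (i₂ + 1) < B₁ (i₁ + 1)) ∧
    (∀ i₂, ¬ ((∃ i₁, B₂ i₂ = B₁ i₁) ∧ (∃ i₁, B₂ (i₂ + 1) = B₁ i₁))) := by
  have key : ∀ i₁ i₂, B₂ i₂ = B₁ i₁ → i₂ < i₁ ∧ B₂ (i₂ + 1) < B₁ (i₁ + 1) := by
    intro i₁ i₂ h
    rw [hB₁, hB₂] at h
    have hlt : (4 * γ * i₂ + i₂ * (i₂ + 1) / 2) < (4 * γ * i₁ + i₁ * (i₁ + 1) / 2) := by omega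
    have hi : i₂ < i₁ := by
      by_contra hc
      exact absurd ((beep_mono γ).le_iff_le.mpr (not_lt.mp hc)) (not_le.mpr hlt)
    refine ⟨hi, ?_⟩
    rw [hB₁, hB₂, beep_step, beep_step]
    omega
  refine ⟨key, ?_⟩
  rintro i₂ ⟨⟨j₁, h1⟩, ⟨j₂, h2⟩⟩
  obtain ⟨hi, hnext⟩ := key j₁ i₂ h1
  -- B₁ j₁ = B₂ i₂ < B₂ (i₂+1) = B₁ j₂ < B₁ (j₁+1)
  have hm : B₂ i₂ < B₂ (i₂ + 1) := by
    rw [hB₂, hB₂, beep_step]; omega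
  have hj2lt : B₁ j₂ < B₁ (j₁ + 1) := h2 ▸ hnext
  have hj2gt : B₁ j₁ < B₁ j₂ := by rw [← h1, ← h2]; exact hm
  have hmono : StrictMono B₁ := by
    intro a b hab
    rw [hB₁, hB₁]
    exact Nat.add_lt_add_left (beep_mono γ hab) _
  have := hmono.lt_iff_lt.mp hj2gt
  have := hmono.lt_iff_lt.mp hj2lt
  omega
end

section
/- Among any 2γ consecutive beep rounds of a later-starting processor (start time t₂ > t₁), at least γ of these rounds are rounds in which the earlier-starting processor (start time t₁) does not beep, where both follow the schedule b(i) = 4γi + i(i+1)/2 offset by their start times. -/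
/-!
The offsets `b i = 4γi + i(i+1)/2` grow with strictly increasing gaps `4γ + i + 1`. If two
consecutive rounds `t₂ + b a`, `t₂ + b (a+1)` of the later processor both hit rounds
`t₁ + b k`, `t₁ + b k'` of the earlier one, then `k > a` (as `t₂ > t₁`) and `k' > k`, so the
earlier processor's gap `b k' - b k ≥ b (k+1) - b k` would exceed the gap `b (a+1) - b a`
it has to match. Hence the colliding slots contain no two consecutive indices, and at most
half of any window of `2γ` slots collides.
-/

open Finset

theorem Finset.card_le_of_subset_range_two_mul_of_succ_notMem {s : Finset ℕ} {n : ℕ}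
    (hs : s ⊆ range (2 * n)) (hsucc : ∀ l ∈ s, l + 1 ∉ s) : #s ≤ n := by
  -- The fibres of `l ↦ l / 2` are pairs of consecutive numbers, so it is injective on `s`.
  have hpairs : #s ≤ #(range n) := by
    refine card_le_card_of_injOn (· / 2) (fun l hl => ?_) fun l hl m hm hlm => ?_
    · have hl2n := mem_range.mp (hs hl)
      simp only [coe_range, Set.mem_Iio]
      omega
    · by_contra hne
      rcases Nat.lt_or_gt_of_ne hne with h | h
      · exact hsucc l hl (by simp only at hlm; rwa [show l + 1 = m by omega])
      · exact hsucc m hm (by simp only at hlm; rwa [show m + 1 = l by omega])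
  simpa using hpairs

section ShiftedSchedules

variable {b : ℕ → ℕ} {t₁ t₂ : ℕ}

theorem not_collide_twice_of_strictMono_gaps (hb : StrictMono b)
    (hgap : StrictMono fun n => b (n + 1) - b n) (ht : t₁ < t₂) {a k k' : ℕ}
    (hk : t₂ + b a = t₁ + b k) (hk' : t₂ + b (a + 1) = t₁ + b k') : False := by
  have hak : a < k := by
    by_contra! hka
    have := hb.monotone hka
    omega
  have hba := hb (Nat.lt_add_one a)
  have hbk := hb (Nat.lt_add_one k)
  have hkk' : k < k' := hb.lt_iff_lt.mp (by omega)
  have hbk' := hb.monotone (show k + 1 ≤ k' from hkk')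
  have hgap_lt : b (a + 1) - b a < b (k + 1) - b k := hgap hak
  omega

open Classical in
theorem le_card_filter_forall_ne_of_strictMono_gaps (hb : StrictMono b)
    (hgap : StrictMono fun n => b (n + 1) - b n) (ht : t₁ < t₂) (n j : ℕ) :
    n ≤ #{l ∈ range (2 * n) | ∀ k, t₂ + b (j + l) ≠ t₁ + b k} := by
  have hcollide : #{l ∈ range (2 * n) | ¬∀ k, t₂ + b (j + l) ≠ t₁ + b k} ≤ n := by
    refine card_le_of_subset_range_two_mul_of_succ_notMem (filter_subset _ _) fun l hl hl1 => ?_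
    simp only [mem_filter, not_forall, not_ne_iff] at hl hl1
    obtain ⟨-, k, hk⟩ := hl
    obtain ⟨-, k', hk'⟩ := hl1
    exact not_collide_twice_of_strictMono_gaps hb hgap ht hk (by rwa [← add_assoc] at hk')
  have := card_filter_add_card_filter_not (s := range (2 * n))
    (p := fun l => ∀ k, t₂ + b (j + l) ≠ t₁ + b k)
  rw [card_range] at this
  omega

end ShiftedSchedules

def beepOffset (γ i : ℕ) : ℕ := 4 * γ * i + i * (i + 1) / 2

theorem beepOffset_succ (γ i : ℕ) :
    beepOffset γ (i + 1) = beepOffset γ i + (4 * γ + i + 1) := by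
  have htri : (i + 1) * (i + 1 + 1) / 2 = i * (i + 1) / 2 + (i + 1) := by
    rw [show (i + 1) * (i + 1 + 1) = i * (i + 1) + (i + 1) * 2 by ring,
      Nat.add_mul_div_right _ _ two_pos]
  simp only [beepOffset, htri]
  ring

theorem beepOffset_strictMono (γ : ℕ) : StrictMono (beepOffset γ) :=
  strictMono_nat_of_lt_succ fun i => by rw [beepOffset_succ]; omega

theorem beepOffset_gap_strictMono (γ : ℕ) :
    StrictMono fun i => beepOffset γ (i + 1) - beepOffset γ i := by
  intro m n hmn
  simp only [beepOffset_succ]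
  omega

open Classical in
theorem at_least_gamma_heard_slots_general (γ t₁ t₂ j : ℕ) (ht : t₁ < t₂)
    (b : ℕ → ℕ) (hb : ∀ i, b i = 4 * γ * i + i * (i + 1) / 2) :
    γ ≤ ((Finset.range (2 * γ)).filter
      (fun l => ∀ k, t₂ + b (j + l) ≠ t₁ + b k)).card := by
  obtain rfl : b = beepOffset γ := funext hb
  exact le_card_filter_forall_ne_of_strictMono_gaps (beepOffset_strictMono γ)
    (beepOffset_gap_strictMono γ) ht γ j

open Classical in
/-- Among any 2γ consecutive beep rounds of a later-starting processor,
at least γ are rounds in which the earlier-starting processor does not beep. -/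
theorem at_least_gamma_heard_slots (γ t₁ t₂ j : ℕ) (hγ : 1 ≤ γ) (ht : t₁ < t₂)
    (b : ℕ → ℕ) (hb : ∀ i, b i = 4 * γ * i + i * (i + 1) / 2) :
    γ ≤ ((Finset.range (2 * γ)).filter
      (fun l => ∀ k, t₂ + b (j + l) ≠ t₁ + b k)).card :=
  at_least_gamma_heard_slots_general γ t₁ t₂ j ht b hb
end

section
/- Suppose each round of the decision algorithm's execution is partitioned into consecutive blocks A₁, B₁, A₂, B₂, ... of x rounds each, and two processors have transformed values differing first at index j. Then in block pair (A_j, B_j), the processor whose j-th transformed bit is 1 beeps throughout A_j and listens throughout B_j, while the processor whose j-th bit is 0 listens throughout A_j and beeps throughout B_j; hence if A_j and B_j each contain a fault-free round, both processors hear a beep during iteration j. Formally: if σ, τ ∈ {0,1}^k differ first at index j and each of two disjoint x-round intervals contains a fault-free round, then both the 'beep where bit is 1 first' schedule determined by σ and the one determined by τ detect a beep in iteration j. -/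
/-- In the aligned Decision schedule with blocks of x rounds, a processor with
transformed bits σ beeps in round r (counted from the common start) iff,
letting i = r / (2x) be the current iteration: σ i = 1 and r is in the first
x-round half, or σ i = 0 and r is in the second x-round half. -/
def decBeeps (x : ℕ) (σ : ℕ → Bool) (r : ℕ) : Prop :=
  if σ (r / (2 * x)) then r % (2 * x) < x else x ≤ r % (2 * x)

lemma dec_div_eq (x j r : ℕ) (h1 : 2 * x * j ≤ r) (h2 : r < 2 * x * (j + 1)) :
    r / (2 * x) = j := by
  apply Nat.div_eq_of_lt_le
  · rwa [mul_comm]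
  · calc r < 2 * x * (j + 1) := h2
      _ = (j + 1) * (2 * x) := by ring

/-- If two processors' transformed values σ, τ first differ at index j, and each
of the two x-round halves A_j, B_j of iteration j contains a fault-free round,
then in iteration j each processor beeps in a fault-free round in which the
other listens; hence both processors hear a beep during iteration j. -/
theorem decision_both_hear (x k : ℕ) (hx : 1 ≤ x) (σ τ : ℕ → Bool)
    (j : ℕ) (hj : j < k) (hdiff : σ j ≠ τ j) (hfirst : ∀ i, i < j → σ i = τ i)
    (faultFree : ℕ → Prop)
    (hA : ∃ r, 2 * x * j ≤ r ∧ r < 2 * x * j + x ∧ faultFree r)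
    (hB : ∃ r, 2 * x * j + x ≤ r ∧ r < 2 * x * (j + 1) ∧ faultFree r) :
    (∃ r, 2 * x * j ≤ r ∧ r < 2 * x * (j + 1) ∧ faultFree r ∧
      decBeeps x σ r ∧ ¬ decBeeps x τ r) ∧
    (∃ r, 2 * x * j ≤ r ∧ r < 2 * x * (j + 1) ∧ faultFree r ∧
      decBeeps x τ r ∧ ¬ decBeeps x σ r) := by
  obtain ⟨a, ha1, ha2, hfa⟩ := hA
  obtain ⟨b, hb1, hb2, hfb⟩ := hB
  have ha2' : a < 2 * x * (j + 1) := by nlinarith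
  have hb1' : 2 * x * j ≤ b := by omega
  have hda : a / (2 * x) = j := dec_div_eq x j a ha1 ha2'
  have hdb : b / (2 * x) = j := dec_div_eq x j b hb1' hb2
  have hma0 := Nat.div_add_mod a (2 * x)
  have hmb0 := Nat.div_add_mod b (2 * x)
  rw [hda] at hma0
  rw [hdb] at hmb0
  have hma : a % (2 * x) < x := by omega
  have hmb : x ≤ b % (2 * x) := by nlinarith
  have hτ : τ j = !σ j := by cases hσ : σ j <;> cases hτ' : τ j <;> simp_all
  cases hσ : σ j with
  | true =>
    constructor
    · exact ⟨a, ha1, ha2', hfa, by simp [decBeeps, hda, hσ, hτ, hma],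
        by simp [decBeeps, hda, hσ, hτ]; omega⟩
    · exact ⟨b, hb1', hb2, hfb, by simp [decBeeps, hdb, hσ, hτ, hmb],
        by simp [decBeeps, hdb, hσ, hτ]; omega⟩
  | false =>
    constructor
    · exact ⟨b, hb1', hb2, hfb, by simp [decBeeps, hdb, hσ, hτ, hmb],
        by simp [decBeeps, hdb, hσ, hτ]; omega⟩
    · exact ⟨a, ha1, ha2', hfa, by simp [decBeeps, hda, hσ, hτ, hma],
        by simp [decBeeps, hda, hσ, hτ]; omega⟩
end

section
/- If all processors have the same transformed value (c₁,...,c_k) and all execute the aligned Decision schedule (beep x rounds then listen x rounds when c_i = 1; listen then beep when c_i = 0), then in every round either all processors beep or all processors listen; consequently no processor ever hears a beep, and all processors exit the loop after exactly 2xk rounds and output their common input value. -/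
/-- If all processors have the same transformed value and execute the aligned
Decision schedule, then in every round either all beep or all listen, so no
processor ever hears a beep; consequently every processor exits the loop after
exactly 2xk rounds and outputs the common input value. -/
theorem decision_all_same_value {ι V : Type*} (x k : ℕ) (hx : 1 ≤ x)
    (c : ℕ → Bool) (sched : ι → ℕ → Bool)
    (hsched : ∀ u r, sched u r = true ↔ decBeeps x c r)
    (faultFree : ℕ → Prop) (val : V)
    (input : ι → V) (hinput : ∀ u, input u = val)
    (hears : ι → ℕ → Prop)
    (hhears : ∀ u r, hears u r ↔
      sched u r = false ∧ (∃ v, v ≠ u ∧ sched v r = true) ∧ faultFree r)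
    (exitRound : ι → ℕ) (output : ι → V)
    (hexit : ∀ u, (∀ r, r < 2 * x * k → ¬ hears u r) → exitRound u = 2 * x * k)
    (houtput : ∀ u, (∀ r, r < 2 * x * k → ¬ hears u r) → output u = input u) :
    (∀ r, (∀ u, sched u r = true) ∨ (∀ u, sched u r = false)) ∧
    (∀ u r, ¬ hears u r) ∧
    (∀ u, exitRound u = 2 * x * k) ∧
    (∀ u, output u = val) := by
  have hsame : ∀ u v r, sched u r = sched v r := by
    intro u v r
    by_cases h : decBeeps x c r
    · rw [(hsched u r).mpr h, (hsched v r).mpr h]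
    · have h1 : sched u r ≠ true := fun hh => h ((hsched u r).mp hh)
      have h2 : sched v r ≠ true := fun hh => h ((hsched v r).mp hh)
      simp only [Bool.not_eq_true] at h1 h2
      rw [h1, h2]
  have hnohear : ∀ u r, ¬ hears u r := by
    intro u r h
    obtain ⟨hf, ⟨v, _, hv⟩, _⟩ := (hhears u r).mp h
    rw [hsame v u, hf] at hv
    exact Bool.false_ne_true hv
  refine ⟨?_, hnohear, fun u => hexit u fun r _ => hnohear u r,
    fun u => (houtput u fun r _ => hnohear u r).trans (hinput u)⟩
  intro r
  by_cases h : decBeeps x c r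
  · exact Or.inl fun u => (hsched u r).mpr h
  · refine Or.inr fun u => ?_
    have := fun hh => h ((hsched u r).mp hh)
    simpa using this
end
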